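/- arXiv:1010.0462 — 4 statements merged into one kernel-verified Lean document; each statement's English description precedes it below -/
import Mathlib

section
/- Exact version of Melleray's theorem: let 𝕌 be the Urysohn space and A, B ⊂ 𝕌 finite subsets. For every isometry p of 𝕌 fixing A ∩ B pointwise and every finite set C ⊆ 𝕌, there exists q in the subgroup generated by Iso_A(𝕌) and Iso_B(𝕌) (isometries fixing A, resp. B, pointwise) such that p(x) = q(x) for all x ∈ C. -/
/-!
The position of the points of `C` relative to `S = A ∪ B` is recorded by the family of
distance functions `w c = dist (y c) ·`. By universality and ultrahomogeneity every Katětov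
family (one compatible with a metric on `S ⊔ C`) is realized in `U`, and two families that
agree on `A` (resp. `B`) have realizations related by an isometry fixing `A` (resp. `B`). So it
suffices to join the family `dist c ·` of the identity to the family `dist (p c) ·` of `p` by
a chain of Katětov families whose consecutive members agree on `A` or on `B`.

Both families agree on `A ∩ B` and lie below
`T c x = min (R, min_{z ∈ A ∩ B} dist c z + dist z x)`. Replace a family alternately by the
largest Katětov extension below `T` of its restriction to `B` and to `A`. After `k` rounds it
is at least `min T (k δ)`, where `δ > 0` is the distance between `A \ B` and `B \ A`, so both
families reach `T` after finitely many rounds.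
-/

theorem Finset.exists_pos_le_dist_of_disjoint {U : Type*} [MetricSpace U] {s t : Finset U}
    (h : Disjoint s t) : ∃ δ > 0, ∀ a ∈ s, ∀ b ∈ t, δ ≤ dist a b := by
  obtain ⟨r, hr, hlt⟩ := Metric.exists_pos_forall_lt_edist s.finite_toSet.isCompact
    t.finite_toSet.isClosed (disjoint_coe.2 h)
  refine ⟨r, hr, fun a ha b hb => le_of_lt ?_⟩
  have hab := hlt a ha b hb
  rwa [edist_nndist, ENNReal.coe_lt_coe] at hab

section Realization

open Finset Function

variable {U : Type*} [MetricSpace U]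

def IsFinitelyUniversal (U : Type*) [MetricSpace U] : Prop :=
  ∀ (X : Type) (_ : MetricSpace X) (_ : Finite X), ∃ f : X → U, Isometry f

def IsUltrahomogeneous (U : Type*) [MetricSpace U] : Prop :=
  ∀ (s : Finset U) (f : U → U), (∀ x ∈ s, ∀ y ∈ s, dist (f x) (f y) = dist x y) →
    ∃ g : U ≃ᵢ U, ∀ x ∈ s, g x = f x

theorem IsUltrahomogeneous.exists_isometryEquiv_apply_eq (hU : IsUltrahomogeneous U)
    {ι : Type*} [Fintype ι] (a b : ι → U) (hab : ∀ i j, dist (b i) (b j) = dist (a i) (a j)) :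
    ∃ g : U ≃ᵢ U, ∀ i, g (a i) = b i := by
  classical
  have hfactor : b.FactorsThrough a := fun i j hij =>
    dist_eq_zero.1 (by rw [hab, hij, dist_self])
  obtain ⟨g, hg⟩ := hU (univ.image a) (extend a b id) <| by
    simp only [mem_image, mem_univ, true_and, forall_exists_index, forall_apply_eq_imp_iff]
    intro i j
    rw [hfactor.extend_apply, hfactor.extend_apply, hab]
  exact ⟨g, fun i => by rw [hg _ (mem_image_of_mem a (mem_univ i)), hfactor.extend_apply]⟩

/-- The Fréchet embedding of a finite pseudometric space into `κ → ℝ` with the sup distance. -/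
theorem dist_rows_eq {ι κ : Type*} [Fintype κ] (D : ι → ι → ℝ) (hself : ∀ i, D i i = 0)
    (hsymm : ∀ i j, D i j = D j i) (htri : ∀ i j k, D i k ≤ D i j + D j k)
    {e : κ → ι} (he : Surjective e) (i j : ι) :
    dist (fun k => D i (e k)) (fun k => D j (e k)) = D i j := by
  have hnonneg : 0 ≤ D i j := by linarith [htri i j i, hself i, hsymm i j]
  refine le_antisymm ((dist_pi_le_iff hnonneg).2 fun k => ?_) ?_
  · rw [Real.dist_eq, abs_le]
    constructor <;> linarith [htri i j (e k), htri j i (e k), hsymm i j]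
  · obtain ⟨k₀, rfl⟩ := he j
    simpa [Real.dist_eq, hself, abs_of_nonneg hnonneg] using
      dist_le_pi_dist (fun k => D i (e k)) (fun k => D (e k₀) (e k)) k₀

theorem IsFinitelyUniversal.exists_dist_eq (hU : IsFinitelyUniversal U) {ι : Type*} [Fintype ι]
    (D : ι → ι → ℝ) (hself : ∀ i, D i i = 0) (hsymm : ∀ i j, D i j = D j i)
    (htri : ∀ i j k, D i k ≤ D i j + D j k) :
    ∃ ψ : ι → U, ∀ i j, dist (ψ i) (ψ j) = D i j := by
  let e := (Fintype.equivFin ι).symm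
  let φ : ι → Fin (Fintype.card ι) → ℝ := fun i k => D i (e k)
  obtain ⟨f, hf⟩ := hU (Set.range φ) inferInstance (Set.finite_range φ).to_subtype
  exact ⟨fun i => f ⟨φ i, Set.mem_range_self i⟩, fun i j => by
    rw [hf.dist_eq]; exact dist_rows_eq D hself hsymm htri e.surjective i j⟩

/-- `w c x` prescribes the distance from a new point standing for `c ∈ C` to `x ∈ S`; the
conditions say that, together with the distances inside `S` and inside `C`, these form a
pseudometric on `S ⊕ C` (see `familyDist`). -/
structure IsKatetovFamily (C S : Finset U) (w : U → U → ℝ) : Prop where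
  le_add_dist : ∀ c ∈ C, ∀ x ∈ S, ∀ y ∈ S, w c x ≤ w c y + dist x y
  dist_le_add : ∀ c ∈ C, ∀ x ∈ S, ∀ y ∈ S, dist x y ≤ w c x + w c y
  le_add_dist_center : ∀ c ∈ C, ∀ c' ∈ C, ∀ x ∈ S, w c x ≤ w c' x + dist c c'
  dist_center_le_add : ∀ c ∈ C, ∀ c' ∈ C, ∀ x ∈ S, dist c c' ≤ w c x + w c' x

structure Realizes (C S : Finset U) (w : U → U → ℝ) (y : U → U) : Prop where
  dist_eq : ∀ c ∈ C, ∀ x ∈ S, dist (y c) x = w c x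
  dist_apply_apply : ∀ c ∈ C, ∀ c' ∈ C, dist (y c) (y c') = dist c c'

variable {C S : Finset U} {w : U → U → ℝ}

theorem IsKatetovFamily.nonneg (hw : IsKatetovFamily C S w) {c x : U} (hc : c ∈ C)
    (hx : x ∈ S) : 0 ≤ w c x := by
  linarith [hw.dist_center_le_add c hc c hc x hx, dist_self c]

theorem realizes_dist {y : U → U} (hy : ∀ c ∈ C, ∀ c' ∈ C, dist (y c) (y c') = dist c c') :
    Realizes C S (fun c x => dist (y c) x) y :=
  ⟨fun _ _ _ _ => rfl, hy⟩

theorem Realizes.isKatetovFamily {y : U → U} (hy : Realizes C S w y) : IsKatetovFamily C S w where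
  le_add_dist c hc x hx x' hx' := by
    rw [← hy.dist_eq c hc x hx, ← hy.dist_eq c hc x' hx', dist_comm x x']
    exact dist_triangle _ _ _
  dist_le_add c hc x hx x' hx' := by
    rw [← hy.dist_eq c hc x hx, ← hy.dist_eq c hc x' hx', dist_comm (y c) x]
    exact dist_triangle _ _ _
  le_add_dist_center c hc c' hc' x hx := by
    rw [← hy.dist_eq c hc x hx, ← hy.dist_eq c' hc' x hx, ← hy.dist_apply_apply c hc c' hc',
      add_comm]
    exact dist_triangle _ _ _
  dist_center_le_add c hc c' hc' x hx := by
    rw [← hy.dist_eq c hc x hx, ← hy.dist_eq c' hc' x hx, ← hy.dist_apply_apply c hc c' hc',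
      dist_comm (y c') x]
    exact dist_triangle _ _ _

def familyDist (C S : Finset U) (w : U → U → ℝ) : S ⊕ C → S ⊕ C → ℝ
  | .inl x, .inl x' => dist (x : U) x'
  | .inl x, .inr c => w c x
  | .inr c, .inl x => w c x
  | .inr c, .inr c' => dist (c : U) c'

theorem IsKatetovFamily.familyDist_triangle (hw : IsKatetovFamily C S w) (z₁ z₂ z₃ : S ⊕ C) :
    familyDist C S w z₁ z₃ ≤ familyDist C S w z₁ z₂ + familyDist C S w z₂ z₃ := by
  rcases z₁ with ⟨x, hx⟩ | ⟨c, hc⟩ <;> rcases z₂ with ⟨y, hy⟩ | ⟨c', hc'⟩ <;>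
    rcases z₃ with ⟨z, hz⟩ | ⟨c'', hc''⟩ <;> simp only [familyDist]
  · exact dist_triangle x y z
  · linarith [hw.le_add_dist c'' hc'' x hx y hy, dist_comm x y]
  · exact hw.dist_le_add c' hc' x hx z hz
  · linarith [hw.le_add_dist_center c'' hc'' c' hc' x hx, dist_comm c' c'']
  · linarith [hw.le_add_dist c hc z hz y hy, dist_comm z y]
  · exact hw.dist_center_le_add c hc c'' hc'' y hy
  · linarith [hw.le_add_dist_center c hc c' hc' z hz]
  · exact dist_triangle c c' c''

theorem IsKatetovFamily.exists_realizes (huniv : IsFinitelyUniversal U)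
    (hhomog : IsUltrahomogeneous U) (hw : IsKatetovFamily C S w) : ∃ y, Realizes C S w y := by
  classical
  obtain ⟨ψ, hψ⟩ := huniv.exists_dist_eq (familyDist C S w)
    (by rintro (x | c) <;> simp [familyDist])
    (by rintro (x | c) (x' | c') <;> simp [familyDist, dist_comm])
    hw.familyDist_triangle
  obtain ⟨g, hg⟩ := hhomog.exists_isometryEquiv_apply_eq (fun x : S => ψ (.inl x)) (↑)
    fun x x' => by rw [hψ]; rfl
  refine ⟨fun c => if hc : c ∈ C then g (ψ (.inr ⟨c, hc⟩)) else c, ?_, ?_⟩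
  · intro c hc x hx
    have hgx : g (ψ (.inl ⟨x, hx⟩)) = x := hg ⟨x, hx⟩
    rw [dif_pos hc]
    nth_rw 1 [← hgx]
    rw [g.dist_eq, hψ]
    rfl
  · intro c hc c' hc'
    rw [dif_pos hc, dif_pos hc', g.dist_eq, hψ]
    rfl

theorem IsUltrahomogeneous.exists_fix_apply_eq (hhomog : IsUltrahomogeneous U) (E : Finset U)
    {y y' : U → U} (hE : ∀ c ∈ C, ∀ x ∈ E, dist (y c) x = dist (y' c) x)
    (hC : ∀ c ∈ C, ∀ c' ∈ C, dist (y c) (y c') = dist (y' c) (y' c')) :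
    ∃ g : U ≃ᵢ U, (∀ x ∈ E, g x = x) ∧ ∀ c ∈ C, g (y c) = y' c := by
  obtain ⟨g, hg⟩ := hhomog.exists_isometryEquiv_apply_eq
    (Sum.elim (fun x : E => (x : U)) fun c : C => y c)
    (Sum.elim (fun x : E => (x : U)) fun c : C => y' c) <| by
      rintro (⟨x, hx⟩ | ⟨c, hc⟩) (⟨x', hx'⟩ | ⟨c', hc'⟩) <;> simp only [Sum.elim_inl, Sum.elim_inr]
      · rw [dist_comm, ← hE c' hc' x hx, dist_comm]
      · rw [hE c hc x' hx']
      · rw [hC c hc c' hc']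
  exact ⟨g, fun x hx => hg (.inl ⟨x, hx⟩), fun c hc => hg (.inr ⟨c, hc⟩)⟩

end Realization

section Chain

open Finset Relation

variable {U : Type*} [MetricSpace U]

def pointwiseStabilizer (A : Finset U) : Set (U ≃ᵢ U) := {g | ∀ x ∈ A, g x = x}

variable [DecidableEq U]

def Adjacent (A B C : Finset U) (w w' : U → U → ℝ) : Prop :=
  IsKatetovFamily C (A ∪ B) w ∧ IsKatetovFamily C (A ∪ B) w' ∧
    ((∀ c ∈ C, ∀ x ∈ A, w c x = w' c x) ∨ ∀ c ∈ C, ∀ x ∈ B, w c x = w' c x)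

instance (A B C : Finset U) : Std.Symm (Adjacent A B C) where
  symm _ _ h := ⟨h.2.1, h.1, h.2.2.imp (fun h c hc x hx => (h c hc x hx).symm)
    (fun h c hc x hx => (h c hc x hx).symm)⟩

variable {A B C : Finset U} {w w' : U → U → ℝ} {y y' : U → U}

theorem exists_mem_pointwiseStabilizer_of_agree (hhomog : IsUltrahomogeneous U)
    (hagree : (∀ c ∈ C, ∀ x ∈ A, w c x = w' c x) ∨ ∀ c ∈ C, ∀ x ∈ B, w c x = w' c x)
    (hy : Realizes C (A ∪ B) w y) (hy' : Realizes C (A ∪ B) w' y') :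
    ∃ g ∈ pointwiseStabilizer A ∪ pointwiseStabilizer B, ∀ c ∈ C, g (y c) = y' c := by
  have hC : ∀ c ∈ C, ∀ c' ∈ C, dist (y c) (y c') = dist (y' c) (y' c') := fun c hc c' hc' => by
    rw [hy.dist_apply_apply c hc c' hc', hy'.dist_apply_apply c hc c' hc']
  rcases hagree with hA | hB
  · obtain ⟨g, hgA, hgy⟩ := hhomog.exists_fix_apply_eq A (fun c hc x hx => by
      rw [hy.dist_eq c hc x (mem_union_left B hx), hy'.dist_eq c hc x (mem_union_left B hx),
        hA c hc x hx]) hC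
    exact ⟨g, Or.inl hgA, hgy⟩
  · obtain ⟨g, hgB, hgy⟩ := hhomog.exists_fix_apply_eq B (fun c hc x hx => by
      rw [hy.dist_eq c hc x (mem_union_right A hx), hy'.dist_eq c hc x (mem_union_right A hx),
        hB c hc x hx]) hC
    exact ⟨g, Or.inr hgB, hgy⟩

theorem exists_mem_closure_of_reflTransGen (huniv : IsFinitelyUniversal U)
    (hhomog : IsUltrahomogeneous U) (h : ReflTransGen (Adjacent A B C) w w')
    (hy : Realizes C (A ∪ B) w y) (hy' : Realizes C (A ∪ B) w' y') :
    ∃ q ∈ Subgroup.closure (pointwiseStabilizer A ∪ pointwiseStabilizer B),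
      ∀ c ∈ C, q (y c) = y' c := by
  induction h generalizing y' with
  | refl =>
    obtain ⟨g, hg, hgy⟩ := exists_mem_pointwiseStabilizer_of_agree hhomog
      (Or.inl fun _ _ _ _ => rfl) hy hy'
    exact ⟨g, Subgroup.subset_closure hg, hgy⟩
  | tail _ hstep ih =>
    obtain ⟨hmid, -, hagree⟩ := hstep
    obtain ⟨ym, hym⟩ := hmid.exists_realizes huniv hhomog
    obtain ⟨q, hq, hqy⟩ := ih hym
    obtain ⟨g, hg, hgy⟩ := exists_mem_pointwiseStabilizer_of_agree hhomog hagree hym hy'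
    refine ⟨g * q, Subgroup.mul_mem _ (Subgroup.subset_closure hg) hq, fun c hc => ?_⟩
    rw [IsometryEquiv.mul_apply, hqy c hc, hgy c hc]

end Chain

section CappedInf

open Finset

variable {α : Type*} {R R' ε a : ℝ} {s : Finset α} {f g : α → ℝ}

noncomputable def cappedInf (R : ℝ) (s : Finset α) (f : α → ℝ) : ℝ :=
  (insert R (s.image f)).min' (insert_nonempty _ _)

theorem cappedInf_le_cap : cappedInf R s f ≤ R :=
  min'_le _ _ (mem_insert_self _ _)

theorem cappedInf_le {b : α} (hb : b ∈ s) : cappedInf R s f ≤ f b :=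
  min'_le _ _ (mem_insert_of_mem (mem_image_of_mem f hb))

theorem le_cappedInf (hR : a ≤ R) (hf : ∀ b ∈ s, a ≤ f b) : a ≤ cappedInf R s f :=
  le_min' _ _ _ <| by simpa [forall_mem_insert, forall_mem_image] using ⟨hR, hf⟩

theorem cappedInf_le_cappedInf_add (hR : R ≤ R' + ε) (hf : ∀ b ∈ s, f b ≤ g b + ε) :
    cappedInf R s f ≤ cappedInf R' s g + ε := by
  have : cappedInf R s f - ε ≤ cappedInf R' s g :=
    le_cappedInf (by linarith [cappedInf_le_cap (R := R) (s := s) (f := f)])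
      fun b hb => by linarith [cappedInf_le (R := R) (f := f) hb, hf b hb]
  linarith

end CappedInf

section KatetovExtension

open Finset

variable {U : Type*} [MetricSpace U]

/-- The largest `1`-Lipschitz extension of `w c` from `E` that stays below `T c`. -/
noncomputable def katetovExt (T : U → U → ℝ) (E : Finset U) (w : U → U → ℝ) (c x : U) : ℝ :=
  cappedInf (T c x) E fun b => w c b + dist b x

structure IsKatetovFamilyUnder (C S P : Finset U) (T w : U → U → ℝ) : Prop
    extends IsKatetovFamily C S w where
  le_bound : ∀ c ∈ C, ∀ x ∈ S, w c x ≤ T c x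
  eq_bound : ∀ c ∈ C, ∀ x ∈ P, w c x = T c x

variable {C S P E : Finset U} {T w : U → U → ℝ} {c c' x y : U}

theorem le_katetovExt (hw : IsKatetovFamily C S w) (hwT : ∀ c ∈ C, ∀ x ∈ S, w c x ≤ T c x)
    (hE : E ⊆ S) (hc : c ∈ C) (hx : x ∈ S) : w c x ≤ katetovExt T E w c x :=
  le_cappedInf (hwT c hc x hx) fun b hb => by
    rw [dist_comm]; exact hw.le_add_dist c hc x hx b (hE hb)

theorem katetovExt_eq (hw : IsKatetovFamily C S w) (hwT : ∀ c ∈ C, ∀ x ∈ S, w c x ≤ T c x)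
    (hE : E ⊆ S) (hc : c ∈ C) (hx : x ∈ E) : katetovExt T E w c x = w c x :=
  le_antisymm ((cappedInf_le (R := T c x) (f := fun b => w c b + dist b x) hx).trans_eq
    (by simp))
    (le_katetovExt hw hwT hE hc (hE hx))

theorem katetovExt_le_add_dist (hT : T c x ≤ T c y + dist x y) :
    katetovExt T E w c x ≤ katetovExt T E w c y + dist x y :=
  cappedInf_le_cappedInf_add hT fun b _ => by linarith [dist_triangle b y x, dist_comm x y]

theorem katetovExt_le_add_dist_center (hT : T c x ≤ T c' x + dist c c')
    (hw : ∀ b ∈ E, w c b ≤ w c' b + dist c c') :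
    katetovExt T E w c x ≤ katetovExt T E w c' x + dist c c' :=
  cappedInf_le_cappedInf_add hT fun b hb => by linarith [hw b hb]

theorem IsKatetovFamilyUnder.extend
    (hTx : ∀ c ∈ C, ∀ x ∈ S, ∀ y ∈ S, T c x ≤ T c y + dist x y)
    (hTc : ∀ c ∈ C, ∀ c' ∈ C, ∀ x ∈ S, T c x ≤ T c' x + dist c c')
    (hw : IsKatetovFamilyUnder C S P T w) (hE : E ⊆ S) (hPE : P ⊆ E) :
    IsKatetovFamilyUnder C S P T (katetovExt T E w) := by
  have hmono : ∀ {c x}, c ∈ C → x ∈ S → w c x ≤ katetovExt T E w c x :=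
    le_katetovExt hw.toIsKatetovFamily hw.le_bound hE
  exact
    { le_add_dist := fun c hc x hx y hy => katetovExt_le_add_dist (hTx c hc x hx y hy)
      dist_le_add := fun c hc x hx y hy => by
        linarith [hw.dist_le_add c hc x hx y hy, hmono hc hx, hmono hc hy]
      le_add_dist_center := fun c hc c' hc' x hx => katetovExt_le_add_dist_center
        (hTc c hc c' hc' x hx) fun b hb => hw.le_add_dist_center c hc c' hc' b (hE hb)
      dist_center_le_add := fun c hc c' hc' x hx => by
        linarith [hw.dist_center_le_add c hc c' hc' x hx, hmono hc hx, hmono hc' hx]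
      le_bound := fun _ _ _ _ => cappedInf_le_cap
      eq_bound := fun c hc x hx => by
        rw [katetovExt_eq hw.toIsKatetovFamily hw.le_bound hE hc (hPE hx), hw.eq_bound c hc x hx] }

/-- One extension step raises the floor `min T t` by the separation `δ` off `E`: points of
`E` either are pinned at `T` or lie at distance at least `δ`. -/
theorem IsKatetovFamilyUnder.min_add_le_katetovExt [DecidableEq U] {δ t : ℝ}
    (hTx : ∀ c ∈ C, ∀ x ∈ S, ∀ y ∈ S, T c x ≤ T c y + dist x y)
    (hw : IsKatetovFamilyUnder C S P T w) (hE : E ⊆ S)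
    (hsep : ∀ b ∈ E \ P, ∀ x ∈ S \ E, δ ≤ dist b x)
    (hfloor : ∀ b ∈ E \ P, min (T c b) t ≤ w c b) (hc : c ∈ C) (hx : x ∈ S \ E) :
    min (T c x) (t + δ) ≤ katetovExt T E w c x := by
  have hxS := (mem_sdiff.1 hx).1
  refine le_cappedInf (min_le_left _ _) fun b hb => ?_
  have hTb : T c x ≤ T c b + dist b x := by
    rw [dist_comm]; exact hTx c hc x hxS b (hE hb)
  by_cases hbP : b ∈ P
  · linarith [min_le_left (T c x) (t + δ), hw.eq_bound c hc b hbP]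
  · have hbEP : b ∈ E \ P := mem_sdiff.2 ⟨hb, hbP⟩
    have hδ := hsep b hbEP x hx
    rcases le_total (T c b) t with h | h
    · linarith [min_le_left (T c x) (t + δ), hfloor b hbEP, min_eq_left h]
    · linarith [min_le_right (T c x) (t + δ), hfloor b hbEP, min_eq_right h]

end KatetovExtension

section Ascent

open Finset Function Relation

variable {U : Type*} [MetricSpace U] [DecidableEq U] {A B C : Finset U} {T w : U → U → ℝ}

theorem IsKatetovFamilyUnder.reflTransGen_adjacent_katetovExt_katetovExt
    (hTx : ∀ c ∈ C, ∀ x ∈ A ∪ B, ∀ y ∈ A ∪ B, T c x ≤ T c y + dist x y)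
    (hTc : ∀ c ∈ C, ∀ c' ∈ C, ∀ x ∈ A ∪ B, T c x ≤ T c' x + dist c c')
    (hw : IsKatetovFamilyUnder C (A ∪ B) (A ∩ B) T w) :
    ReflTransGen (Adjacent A B C) w (katetovExt T A (katetovExt T B w)) := by
  have hw₁ := hw.extend hTx hTc subset_union_right inter_subset_right
  have hw₂ := hw₁.extend hTx hTc subset_union_left inter_subset_left
  refine (ReflTransGen.single ⟨hw.toIsKatetovFamily, hw₁.toIsKatetovFamily, Or.inr ?_⟩).tail
    ⟨hw₁.toIsKatetovFamily, hw₂.toIsKatetovFamily, Or.inl ?_⟩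
  · exact fun c hc x hx =>
      (katetovExt_eq hw₁.toIsKatetovFamily hw₁.le_bound subset_union_left hc hx).symm
  · exact fun c hc x hx =>
      (katetovExt_eq hw.toIsKatetovFamily hw.le_bound subset_union_right hc hx).symm

theorem IsKatetovFamilyUnder.min_add_le_katetovExt_katetovExt {δ t : ℝ} (hδ : 0 ≤ δ)
    (hTx : ∀ c ∈ C, ∀ x ∈ A ∪ B, ∀ y ∈ A ∪ B, T c x ≤ T c y + dist x y)
    (hTc : ∀ c ∈ C, ∀ c' ∈ C, ∀ x ∈ A ∪ B, T c x ≤ T c' x + dist c c')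
    (hw : IsKatetovFamilyUnder C (A ∪ B) (A ∩ B) T w)
    (hsep : ∀ a ∈ A \ B, ∀ b ∈ B \ A, δ ≤ dist a b)
    (hfloor : ∀ c ∈ C, ∀ x ∈ A ∪ B, min (T c x) t ≤ w c x) {c x : U} (hc : c ∈ C)
    (hx : x ∈ A ∪ B) : min (T c x) (t + δ) ≤ katetovExt T A (katetovExt T B w) c x := by
  have hw₁ := hw.extend hTx hTc subset_union_right inter_subset_right
  have h₁ : ∀ b ∈ A \ B, min (T c b) (t + δ) ≤ katetovExt T B w c b := fun b hb =>
    hw.min_add_le_katetovExt hTx subset_union_right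
      (by simpa [sdiff_inter_self_right, union_sdiff_right, dist_comm] using
        fun b hb x hx => hsep x hx b hb)
      (fun b hb => hfloor c hc b (mem_union_right A (mem_sdiff.1 hb).1)) hc
      (by rwa [union_sdiff_right])
  by_cases hxA : x ∈ A
  · rw [katetovExt_eq hw₁.toIsKatetovFamily hw₁.le_bound subset_union_left hc hxA]
    by_cases hxB : x ∈ B
    · rw [hw₁.eq_bound c hc x (mem_inter.2 ⟨hxA, hxB⟩)]
      exact min_le_left _ _
    · exact h₁ x (mem_sdiff.2 ⟨hxA, hxB⟩)
  · exact hw₁.min_add_le_katetovExt hTx subset_union_left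
      (by simpa [sdiff_inter_self_left, union_sdiff_left] using hsep)
      (fun b hb => (min_le_min_left _ (by linarith)).trans
        (h₁ b (by rwa [sdiff_inter_self_left] at hb))) hc (mem_sdiff.2 ⟨hx, hxA⟩)

theorem IsKatetovFamilyUnder.exists_reflTransGen_adjacent_eq
    (hTx : ∀ c ∈ C, ∀ x ∈ A ∪ B, ∀ y ∈ A ∪ B, T c x ≤ T c y + dist x y)
    (hTc : ∀ c ∈ C, ∀ c' ∈ C, ∀ x ∈ A ∪ B, T c x ≤ T c' x + dist c c')
    (hw : IsKatetovFamilyUnder C (A ∪ B) (A ∩ B) T w) :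
    ∃ w', ReflTransGen (Adjacent A B C) w w' ∧ IsKatetovFamily C (A ∪ B) w' ∧
      ∀ c ∈ C, ∀ x ∈ A ∪ B, w' c x = T c x := by
  obtain ⟨δ, hδ, hsep⟩ := exists_pos_le_dist_of_disjoint (disjoint_sdiff_sdiff (x := A) (y := B))
  obtain ⟨R, hR⟩ := ((C ×ˢ (A ∪ B)).image fun z => T z.1 z.2).exists_le
  obtain ⟨K, hK⟩ := exists_nat_ge (R / δ)
  let W : ℕ → U → U → ℝ := fun k => (fun w => katetovExt T A (katetovExt T B w))^[k] w
  have hW : ∀ k : ℕ, IsKatetovFamilyUnder C (A ∪ B) (A ∩ B) T (W k) ∧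
      ReflTransGen (Adjacent A B C) w (W k) ∧
      ∀ c ∈ C, ∀ x ∈ A ∪ B, min (T c x) (k * δ) ≤ W k c x := by
    intro k
    induction k with
    | zero =>
      refine ⟨hw, .refl, fun c hc x hx => ?_⟩
      simpa [W] using (min_le_right (T c x) 0).trans (hw.nonneg hc hx)
    | succ k ih =>
      obtain ⟨hWk, hchain, hfloor⟩ := ih
      rw [show W (k + 1) = katetovExt T A (katetovExt T B (W k)) from iterate_succ_apply' _ _ _,
        Nat.cast_succ, add_one_mul]
      exact ⟨(hWk.extend hTx hTc subset_union_right inter_subset_right).extend hTx hTc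
        subset_union_left inter_subset_left,
        hchain.trans (hWk.reflTransGen_adjacent_katetovExt_katetovExt hTx hTc),
        fun c hc x hx => hWk.min_add_le_katetovExt_katetovExt hδ.le hTx hTc hsep hfloor hc hx⟩
  obtain ⟨hWK, hchain, hfloor⟩ := hW K
  refine ⟨W K, hchain, hWK.toIsKatetovFamily, fun c hc x hx =>
    le_antisymm (hWK.le_bound c hc x hx) ?_⟩
  have hTK : T c x ≤ K * δ :=
    (hR _ (mem_image.2 ⟨(c, x), mem_product.2 ⟨hc, hx⟩, rfl⟩)).trans ((div_le_iff₀ hδ).1 hK)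
  simpa [min_eq_left hTK] using hfloor c hc x hx

theorem IsKatetovFamilyUnder.reflTransGen_adjacent {w' : U → U → ℝ}
    (hTx : ∀ c ∈ C, ∀ x ∈ A ∪ B, ∀ y ∈ A ∪ B, T c x ≤ T c y + dist x y)
    (hTc : ∀ c ∈ C, ∀ c' ∈ C, ∀ x ∈ A ∪ B, T c x ≤ T c' x + dist c c')
    (hw : IsKatetovFamilyUnder C (A ∪ B) (A ∩ B) T w)
    (hw' : IsKatetovFamilyUnder C (A ∪ B) (A ∩ B) T w') :
    ReflTransGen (Adjacent A B C) w w' := by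
  obtain ⟨v, hv, hvK, hvT⟩ := hw.exists_reflTransGen_adjacent_eq hTx hTc
  obtain ⟨v', hv', hvK', hvT'⟩ := hw'.exists_reflTransGen_adjacent_eq hTx hTc
  have hvv' : Adjacent A B C v v' := ⟨hvK, hvK', Or.inl fun c hc x hx => by
    rw [hvT c hc x (mem_union_left B hx), hvT' c hc x (mem_union_left B hx)]⟩
  exact (hv.tail hvv').trans (Std.Symm.symm _ _ hv')

end Ascent

section PathBound

variable {U : Type*} [MetricSpace U] {R : ℝ} {C S P : Finset U}

/-- The largest function below `R` that is `1`-Lipschitz in both variables and equals the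
distance on `P`. -/
noncomputable def pathBound (R : ℝ) (P : Finset U) (c x : U) : ℝ :=
  cappedInf R P fun z => dist c z + dist z x

theorem pathBound_le_add_dist (c x y : U) : pathBound R P c x ≤ pathBound R P c y + dist x y :=
  cappedInf_le_cappedInf_add (by linarith [dist_nonneg (x := x) (y := y)]) fun z _ => by
    linarith [dist_triangle z y x, dist_comm x y]

theorem pathBound_le_add_dist_left (c c' x : U) :
    pathBound R P c x ≤ pathBound R P c' x + dist c c' :=
  cappedInf_le_cappedInf_add (by linarith [dist_nonneg (x := c) (y := c')]) fun z _ => by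
    linarith [dist_triangle c c' z, dist_comm c c']

theorem isKatetovFamilyUnder_pathBound {y : U → U}
    (hy : ∀ c ∈ C, ∀ c' ∈ C, dist (y c) (y c') = dist c c')
    (hP : ∀ c ∈ C, ∀ z ∈ P, dist (y c) z = dist c z) (hR : ∀ c ∈ C, ∀ x ∈ S, dist (y c) x ≤ R)
    (hPS : P ⊆ S) : IsKatetovFamilyUnder C S P (pathBound R P) fun c x => dist (y c) x := by
  have hle : ∀ c ∈ C, ∀ x ∈ S, dist (y c) x ≤ pathBound R P c x := fun c hc x hx =>
    le_cappedInf (hR c hc x hx) fun z hz => by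
      rw [← hP c hc z hz]; exact dist_triangle _ _ _
  refine ⟨(realizes_dist hy).isKatetovFamily, hle, fun c hc x hx => ?_⟩
  refine le_antisymm (hle c hc x (hPS hx)) ?_
  rw [hP c hc x hx]
  exact (cappedInf_le (R := R) (f := fun z => dist c z + dist z x) hx).trans_eq (by simp)

end PathBound

theorem melleray_exact_general
    (U : Type*) [MetricSpace U]
    -- universality for finite metric spaces
    (huniv : ∀ (X : Type) (_ : MetricSpace X) (_ : Finite X), ∃ f : X → U, Isometry f)
    -- ultrahomogeneity: every partial isometry between finite subsets extends
    (hhomog : ∀ (s : Finset U) (f : U → U),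
      (∀ x ∈ s, ∀ y ∈ s, dist (f x) (f y) = dist x y) →
      ∃ g : U ≃ᵢ U, ∀ x ∈ s, g x = f x)
    (A B C : Finset U) (p : U ≃ᵢ U)
    (hp : ∀ x ∈ (A : Set U) ∩ (B : Set U), p x = x) :
    ∃ q ∈ Subgroup.closure
        ({g : U ≃ᵢ U | ∀ x ∈ A, g x = x} ∪ {g : U ≃ᵢ U | ∀ x ∈ B, g x = x}),
      ∀ x ∈ C, p x = q x := by
  classical
  obtain ⟨R, hR⟩ :=
    ((C ×ˢ (A ∪ B)).image fun z => max (dist z.1 z.2) (dist (p z.1) z.2)).exists_le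
  have hRC : ∀ c ∈ C, ∀ x ∈ A ∪ B, max (dist c x) (dist (p c) x) ≤ R := fun c hc x hx =>
    hR _ (Finset.mem_image.2 ⟨(c, x), Finset.mem_product.2 ⟨hc, hx⟩, rfl⟩)
  have hpP : ∀ c ∈ C, ∀ z ∈ A ∩ B, dist (p c) z = dist c z := fun c _ z hz => by
    rw [← p.dist_eq c z, hp z (by simpa using hz)]
  have hdist := isKatetovFamilyUnder_pathBound (y := id) (fun _ _ _ _ => rfl)
    (fun _ _ _ _ => rfl) (fun c hc x hx => (le_max_left _ _).trans (hRC c hc x hx))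
    Finset.inter_subset_union
  have hdistp := isKatetovFamilyUnder_pathBound (y := p) (fun c _ c' _ => p.dist_eq c c') hpP
    (fun c hc x hx => (le_max_right _ _).trans (hRC c hc x hx)) Finset.inter_subset_union
  have hchain := hdist.reflTransGen_adjacent (fun c _ x _ y _ => pathBound_le_add_dist c x y)
    (fun c _ c' _ x _ => pathBound_le_add_dist_left c c' x) hdistp
  obtain ⟨q, hq, hqp⟩ := exists_mem_closure_of_reflTransGen huniv hhomog hchain
    (realizes_dist fun _ _ _ _ => rfl) (realizes_dist fun c _ c' _ => p.dist_eq c c')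
  exact ⟨q, hq, fun x hx => (hqp x hx).symm⟩

/-- Exact version of Melleray's theorem. `U` is the Urysohn space, characterized as a
complete separable metric space which is universal for finite metric spaces and
ultrahomogeneous. For finite `A, B ⊆ U`, every isometry fixing `A ∩ B` pointwise agrees
on any prescribed finite set `C` with some element of the subgroup generated by the
pointwise stabilizers of `A` and of `B`. -/
theorem melleray_exact
    (U : Type*) [MetricSpace U] [CompleteSpace U] [TopologicalSpace.SeparableSpace U]
    -- universality for finite metric spaces
    (huniv : ∀ (X : Type) (_ : MetricSpace X) (_ : Finite X), ∃ f : X → U, Isometry f)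
    -- ultrahomogeneity: every partial isometry between finite subsets extends
    (hhomog : ∀ (s : Finset U) (f : U → U),
      (∀ x ∈ s, ∀ y ∈ s, dist (f x) (f y) = dist x y) →
      ∃ g : U ≃ᵢ U, ∀ x ∈ s, g x = f x)
    (A B C : Finset U) (p : U ≃ᵢ U)
    (hp : ∀ x ∈ (A : Set U) ∩ (B : Set U), p x = x) :
    ∃ q ∈ Subgroup.closure
        ({g : U ≃ᵢ U | ∀ x ∈ A, g x = x} ∪ {g : U ≃ᵢ U | ∀ x ∈ B, g x = x}),
      ∀ x ∈ C, p x = q x :=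
  melleray_exact_general U huniv hhomog A B C p hp
end

section
/- For the rational Urysohn space ℚ𝕌 and finite subsets A, B ⊂ ℚ𝕌, the group of isometries fixing A ∩ B pointwise equals the closure of the subgroup generated by the isometries fixing A pointwise together with the isometries fixing B pointwise: Iso_{A∩B}(ℚ𝕌) = cl⟨Iso_A(ℚ𝕌), Iso_B(ℚ𝕌)⟩. -/
/-!
Let `g` fix `A ∩ B` pointwise and let `x` enumerate a finite set `F`. Enumerate `A ∪ B` as `s`
and record the distances `dist (x j) (s i)` as a configuration `f`. Replacing `f` by its free
amalgam over `A` (or `B`), i.e. moving the points as far from `s` as the distances to `A` allow,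
truncated at a rational bound `R`, can be realized by an isometry fixing `A` (or `B`): realize
the new configuration in `U` by universality and move onto it by ultrahomogeneity. Alternating
these pushes increases the configuration; all values stay in `[0, R] ∩ (1/N)ℤ` for a common
denominator `N` of the relevant distances, so the process stops, and a configuration fixed by
both pushes is the free amalgam over `A ∩ B`. That amalgam only depends on the distances to
`A ∩ B`, which `g` preserves, so `x` and `g ∘ x` are both moved by `⟨Iso_A, Iso_B⟩` to
realizations of the same configuration, and one more isometry fixing `A ∪ B` connects them.
Hence `g` is a pointwise limit of elements of `⟨Iso_A, Iso_B⟩`; conversely `Iso_{A ∩ B}` is a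
closed subgroup containing `Iso_A` and `Iso_B`.
-/

open Finset

namespace RationalUrysohn

theorem fold_min_mem {α β : Type*} [LinearOrder β] {S : Set β} {s : Finset α} {b : β}
    {f : α → β} (hb : b ∈ S) (hf : ∀ a ∈ s, f a ∈ S) : s.fold min b f ∈ S := by
  induction s using Finset.cons_induction with
  | empty => exact hb
  | cons a s ha ih =>
    rw [fold_cons]
    rcases min_choice (f a) (s.fold min b f) with h | h <;> rw [h]
    · exact hf a (mem_cons_self a s)
    · exact ih fun a' ha' => hf a' (mem_cons_of_mem ha')

section Configuration

variable {U ι κ : Type*} [MetricSpace U] (s : κ → U) (x : ι → U)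

def distProfile (z : ι → U) : ι → κ → ℝ := fun j i => dist (z j) (s i)

@[simp]
theorem distProfile_apply (z : ι → U) (j : ι) (i : κ) : distProfile s z j i = dist (z j) (s i) :=
  rfl

/-- `f j i` is meant as `dist (z j) (s i)` for some `z` with the same mutual distances as `x`;
these are the triangle inequalities that make such a `z` exist (`exists_distProfile_eq`). -/
structure IsConf (f : ι → κ → ℝ) : Prop where
  le_add_dist : ∀ j i i', f j i ≤ f j i' + dist (s i') (s i)
  dist_le_add : ∀ j i i', dist (s i) (s i') ≤ f j i + f j i'
  le_dist_add : ∀ j k i, f j i ≤ dist (x j) (x k) + f k i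
  dist_le_add' : ∀ j k i, dist (x j) (x k) ≤ f j i + f k i

theorem isConf_distProfile {z : ι → U} (hzx : ∀ j k, dist (z j) (z k) = dist (x j) (x k)) :
    IsConf s x (distProfile s z) where
  le_add_dist _ _ _ := dist_triangle _ _ _
  dist_le_add _ _ _ := dist_triangle_left _ _ _
  le_dist_add j k _ := hzx j k ▸ dist_triangle _ _ _
  dist_le_add' j k _ := hzx j k ▸ dist_triangle_right _ _ _

/-- Free amalgamation of the configuration `f` over `I`, truncated at `R`. -/
def pushConf (R : ℝ) (I : Finset κ) (f : ι → κ → ℝ) : ι → κ → ℝ :=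
  fun j i => I.fold min R fun a => f j a + dist (s a) (s i)

variable {s x} {R : ℝ} {I : Finset κ} {f : ι → κ → ℝ}

theorem IsConf.nonneg (hf : IsConf s x f) (j : ι) (i : κ) : 0 ≤ f j i := by
  linarith [hf.dist_le_add j i i, dist_self (s i)]

@[reducible]
def IsConf.pseudoMetricSpace (hf : IsConf s x f) : PseudoMetricSpace (κ ⊕ ι) where
  dist
    | .inl i, .inl i' => dist (s i) (s i')
    | .inl i, .inr j | .inr j, .inl i => f j i
    | .inr j, .inr k => dist (x j) (x k)
  dist_self := by rintro (i | j) <;> simp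
  dist_comm := by rintro (i | j) (i' | k) <;> simp [dist_comm]
  dist_triangle := by
    rintro (i | j) (i' | j') (i'' | j'') <;> dsimp only
    · exact dist_triangle _ _ _
    · linarith [hf.le_add_dist j'' i i', dist_comm (s i) (s i')]
    · exact hf.dist_le_add j' i i''
    · linarith [hf.le_dist_add j'' j' i, dist_comm (x j') (x j'')]
    · exact hf.le_add_dist j i'' i'
    · exact hf.dist_le_add' j j'' i'
    · exact hf.le_dist_add j j' i''
    · exact dist_triangle _ _ _
  edist_dist _ _ := rfl

variable (s R I f) in
theorem pushConf_le_cap (j : ι) (i : κ) : pushConf s R I f j i ≤ R :=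
  (fold_min_le _).2 (Or.inl le_rfl)

variable (s R f) in
theorem pushConf_le_add_dist {a : κ} (ha : a ∈ I) (j : ι) (i : κ) :
    pushConf s R I f j i ≤ f j a + dist (s a) (s i) :=
  (fold_min_le _).2 (Or.inr ⟨a, ha, le_rfl⟩)

variable (s R I f) in
theorem pushConf_le_pushConf_add_dist (j : ι) (i i' : κ) :
    pushConf s R I f j i ≤ pushConf s R I f j i' + dist (s i') (s i) := by
  rw [← sub_le_iff_le_add]
  refine (le_fold_min _).2 ⟨?_, fun a ha => ?_⟩
  · linarith [pushConf_le_cap s R I f j i, dist_nonneg (x := s i') (y := s i)]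
  · linarith [pushConf_le_add_dist s R f ha j i, dist_triangle (s a) (s i') (s i)]

theorem pushConf_le_dist_add_pushConf (hf : ∀ j k i, f j i ≤ dist (x j) (x k) + f k i)
    (j k : ι) (i : κ) : pushConf s R I f j i ≤ dist (x j) (x k) + pushConf s R I f k i := by
  rw [← sub_le_iff_le_add']
  refine (le_fold_min _).2 ⟨?_, fun a ha => ?_⟩
  · linarith [pushConf_le_cap s R I f j i, dist_nonneg (x := x j) (y := x k)]
  · linarith [pushConf_le_add_dist s R f ha j i, hf j k a]

theorem pushConf_congr {f' : ι → κ → ℝ} (h : ∀ j, ∀ i ∈ I, f j i = f' j i) :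
    pushConf s R I f = pushConf s R I f' :=
  funext fun j => funext fun i => fold_congr fun a ha => by rw [h j a ha]

theorem le_pushConf (hf : ∀ j i i', f j i ≤ f j i' + dist (s i') (s i))
    (hR : ∀ j i, f j i ≤ R) : f ≤ pushConf s R I f := fun j i =>
  (le_fold_min _).2 ⟨hR j i, fun a _ => hf j i a⟩

theorem pushConf_eq_of_mem (hf : ∀ j i i', f j i ≤ f j i' + dist (s i') (s i))
    (hR : ∀ j i, f j i ≤ R) {i : κ} (hi : i ∈ I) (j : ι) : pushConf s R I f j i = f j i :=
  le_antisymm (by simpa using pushConf_le_add_dist s R f hi j i) (le_pushConf hf hR j i)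

variable (s x) in
/-- The invariant of the pushing process; the grid condition is what makes the process stop. -/
structure Admissible (C : Finset κ) (R δ : ℝ) (f : ι → κ → ℝ) : Prop where
  isConf : IsConf s x f
  le_cap : ∀ j i, f j i ≤ R
  eq_on : ∀ j, ∀ c ∈ C, f j c = dist (x j) (s c)
  mem_grid : ∀ j i, f j i ∈ AddSubgroup.zmultiples δ

theorem Admissible.pushConf {C : Finset κ} {δ : ℝ} (hf : Admissible s x C R δ f) (hCI : C ⊆ I)
    (hR : R ∈ AddSubgroup.zmultiples δ)
    (hs : ∀ a i, dist (s a) (s i) ∈ AddSubgroup.zmultiples δ) :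
    Admissible s x C R δ (pushConf s R I f) := by
  have hle := le_pushConf (I := I) hf.isConf.le_add_dist hf.le_cap
  refine ⟨⟨pushConf_le_pushConf_add_dist s R I f, fun j i i' => ?_,
    pushConf_le_dist_add_pushConf hf.isConf.le_dist_add, fun j k i => ?_⟩,
    pushConf_le_cap s R I f, fun j c hc => ?_, fun j i => ?_⟩
  · linarith [hf.isConf.dist_le_add j i i', hle j i, hle j i']
  · linarith [hf.isConf.dist_le_add' j k i, hle j i, hle k i]
  · rw [pushConf_eq_of_mem hf.isConf.le_add_dist hf.le_cap (hCI hc), hf.eq_on j c hc]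
  · exact fold_min_mem hR fun a _ => add_mem (hf.mem_grid j a) (hs a i)

theorem finite_setOf_admissible [Finite ι] [Finite κ] (C : Finset κ) (R δ : ℝ) :
    {f | Admissible s x C R δ f}.Finite := by
  have hV : (Set.Icc 0 R ∩ (AddSubgroup.zmultiples δ : Set ℝ)).Finite :=
    Metric.finite_isBounded_inter_isClosed
      (SetLike.isDiscrete_iff_discreteTopology.2 inferInstance) (Metric.isBounded_Icc 0 R)
      AddSubgroup.isClosed_of_discrete
  refine (Set.Finite.pi' fun _ => Set.Finite.pi' fun _ => hV).subset fun f hf j i => ?_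
  exact ⟨⟨hf.isConf.nonneg j i, hf.le_cap j i⟩, hf.mem_grid j i⟩

theorem pushConf_inter_eq_self [Finite κ] [DecidableEq κ] (hs : Function.Injective s)
    (hf : ∀ j i i', f j i ≤ f j i' + dist (s i') (s i)) (hR : ∀ j i, f j i ≤ R)
    {IA IB : Finset κ} (hA : pushConf s R IA f = f) (hB : pushConf s R IB f = f) :
    pushConf s R (IA ∩ IB) f = f := by
  set g := pushConf s R (IA ∩ IB) f
  refine le_antisymm (fun j => ?_) (le_pushConf hf hR)
  set V : Set κ := {i | f j i < g j i}
  by_contra hV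
  have hVne : V.Nonempty := by
    obtain ⟨i, hi⟩ := not_forall.1 hV
    exact ⟨i, not_le.1 hi⟩
  obtain ⟨i₀, hi₀ : f j i₀ < g j i₀, hmin⟩ := Set.exists_min_image V (f j) V.toFinite hVne
  -- At a minimal violation `i₀ ∉ I`, the minimum defining `pushConf s R I f j i₀` is attained
  -- at some `a` with `f j a < f j i₀`, and the bound `g ≤ f` at `a` propagates to `i₀`.
  have hfixed (I : Finset κ) (hI : pushConf s R I f = f) (hi₀I : i₀ ∉ I) : False := by
    obtain hRle | ⟨a, haI, ha⟩ := (fold_min_le _).1 (congrFun (congrFun hI j) i₀).le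
    · linarith [pushConf_le_cap s R (IA ∩ IB) f j i₀]
    have hpos : 0 < dist (s a) (s i₀) := dist_pos.2 (hs.ne fun h => hi₀I (h ▸ haI))
    have ha : g j a ≤ f j a := not_lt.1 fun haV => by linarith [hmin a haV]
    linarith [pushConf_le_pushConf_add_dist s R (IA ∩ IB) f j i₀ a]
  by_cases hA' : i₀ ∈ IA
  · by_cases hB' : i₀ ∈ IB
    · exact hi₀.ne (pushConf_eq_of_mem hf hR (mem_inter.2 ⟨hA', hB'⟩) j).symm
    · exact hfixed IB hB hB'
  · exact hfixed IA hA hA'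

end Configuration

def IsRationalMetric (X : Type*) [PseudoMetricSpace X] : Prop :=
  ∀ x y : X, ∃ r : ℚ, dist x y = r

def IsRationalUniversal (U : Type*) [MetricSpace U] : Prop :=
  ∀ (X : Type) (_ : MetricSpace X) (_ : Finite X), IsRationalMetric X →
    ∃ f : X → U, Isometry f

def IsUltrahomogeneous (U : Type*) [MetricSpace U] : Prop :=
  ∀ (s : Finset U) (f : U → U), (∀ x ∈ s, ∀ y ∈ s, dist (f x) (f y) = dist x y) →
    ∃ g : U ≃ᵢ U, ∀ x ∈ s, g x = f x

variable {U : Type*} [MetricSpace U]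

theorem IsUltrahomogeneous.exists_apply_eq (hU : IsUltrahomogeneous U) {ι : Type*} [Finite ι]
    {p q : ι → U} (h : ∀ i j, dist (q i) (q j) = dist (p i) (p j)) :
    ∃ g : U ≃ᵢ U, ∀ i, g (p i) = q i := by
  classical
  have := Fintype.ofFinite ι
  have hq : q.FactorsThrough p := fun a b hab => dist_eq_zero.1 (by rw [h, hab, dist_self])
  obtain ⟨g, hg⟩ := hU (univ.image p) (Function.extend p q id) (by
    simp only [mem_image, mem_univ, true_and, forall_exists_index, forall_apply_eq_imp_iff,
      hq.extend_apply]
    exact h)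
  exact ⟨g, fun i => by rw [hg _ (mem_image_of_mem p (mem_univ i)), hq.extend_apply]⟩

theorem IsUltrahomogeneous.exists_fix_apply_eq (hU : IsUltrahomogeneous U) {κ ι : Type*}
    [Finite ι] (s : κ → U) (I : Finset κ) {z z' : ι → U}
    (hz : ∀ j k, dist (z' j) (z' k) = dist (z j) (z k))
    (hzs : ∀ j, ∀ i ∈ I, dist (z' j) (s i) = dist (z j) (s i)) :
    ∃ σ : U ≃ᵢ U, (∀ i ∈ I, σ (s i) = s i) ∧ ∀ j, σ (z j) = z' j := by
  obtain ⟨σ, hσ⟩ := hU.exists_apply_eq (p := Sum.elim (fun i : I => s i) z)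
    (q := Sum.elim (fun i : I => s i) z') (by
      rintro (i | j) (i' | k) <;> simp only [Sum.elim_inl, Sum.elim_inr]
      · rw [dist_comm, hzs k i i.2, dist_comm]
      · exact hzs j i' i'.2
      · exact hz j k)
  exact ⟨σ, fun i hi => hσ (.inl ⟨i, hi⟩), fun j => hσ (.inr j)⟩

theorem IsRationalUniversal.exists_isometry (hU : IsRationalUniversal U) (X : Type*)
    [MetricSpace X] [Finite X] (hX : IsRationalMetric X) : ∃ f : X → U, Isometry f := by
  obtain ⟨n, ⟨e⟩⟩ := Finite.exists_equiv_fin X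
  let : MetricSpace (Fin n) := MetricSpace.induced e.symm e.symm.injective inferInstance
  obtain ⟨f, hf⟩ := hU (Fin n) _ inferInstance fun a b => hX (e.symm a) (e.symm b)
  refine ⟨f ∘ e, hf.comp (Isometry.of_dist_eq fun a b => ?_)⟩
  change dist (e.symm (e a)) (e.symm (e b)) = dist a b
  simp

theorem exists_dist_eq_extend (huniv : IsRationalUniversal U) (hhomog : IsUltrahomogeneous U)
    {X : Type*} [PseudoMetricSpace X] [Finite X] (hX : IsRationalMetric X) {κ : Type*}
    [Finite κ] (e : κ → X) (s : κ → U) (hs : ∀ i i', dist (s i) (s i') = dist (e i) (e i')) :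
    ∃ φ : X → U, (∀ a b, dist (φ a) (φ b) = dist a b) ∧ ∀ i, φ (e i) = s i := by
  have : Finite (SeparationQuotient X) := Finite.of_surjective _ SeparationQuotient.surjective_mk
  have hQ : IsRationalMetric (SeparationQuotient X) :=
    SeparationQuotient.surjective_mk.forall₂.2 fun a b => hX a b
  obtain ⟨ψ, hψ⟩ := huniv.exists_isometry _ hQ
  obtain ⟨σ, hσ⟩ := hhomog.exists_apply_eq (p := fun i => ψ (.mk (e i))) (q := s) fun i i' => by
    rw [hψ.dist_eq, SeparationQuotient.dist_mk, hs]
  refine ⟨fun a => σ (ψ (.mk a)), fun a b => ?_, hσ⟩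
  rw [σ.dist_eq, hψ.dist_eq, SeparationQuotient.dist_mk]

theorem exists_distProfile_eq (hrat : IsRationalMetric U) (huniv : IsRationalUniversal U)
    (hhomog : IsUltrahomogeneous U) {ι κ : Type*} [Finite ι] [Finite κ] {s : κ → U}
    {x : ι → U} {f : ι → κ → ℝ} (hf : IsConf s x f) (hfq : ∀ j i, ∃ r : ℚ, f j i = r) :
    ∃ z : ι → U, distProfile s z = f ∧ ∀ j k, dist (z j) (z k) = dist (x j) (x k) := by
  let := hf.pseudoMetricSpace
  obtain ⟨φ, hφ, hφs⟩ := exists_dist_eq_extend huniv hhomog (X := κ ⊕ ι)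
    (by rintro (i | j) (i' | k) <;> first | exact hrat _ _ | exact hfq _ _)
    Sum.inl s fun _ _ => rfl
  refine ⟨fun j => φ (.inr j), funext fun j => funext fun i => ?_, fun j k => hφ _ _⟩
  rw [distProfile, ← hφs, hφ]
  rfl

theorem IsRationalMetric.exists_dist_mem_zmultiples (hrat : IsRationalMetric U) (T : Finset U) :
    ∃ N : ℕ, ∀ u ∈ T, ∀ v ∈ T, dist u v ∈ AddSubgroup.zmultiples (N : ℝ)⁻¹ := by
  choose r hr using hrat
  refine ⟨∏ p ∈ T ×ˢ T, (r p.1 p.2).den, fun u hu v hv => ?_⟩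
  obtain ⟨m, hm⟩ := dvd_prod_of_mem (fun p : U × U => (r p.1 p.2).den)
    (show (u, v) ∈ T ×ˢ T from mem_product.2 ⟨hu, hv⟩)
  have hm0 : (m : ℝ) ≠ 0 := by
    rintro h
    rw [Nat.cast_eq_zero] at h
    exact prod_ne_zero_iff.2 (fun (p : U × U) _ => (r p.1 p.2).den_ne_zero)
      (by rw [hm, h, mul_zero])
  refine AddSubgroup.mem_zmultiples_iff.2 ⟨(r u v).num * m, ?_⟩
  rw [hm, hr, zsmul_eq_mul, Rat.cast_def]
  push_cast
  field_simp

theorem exists_rat_eq_of_mem_zmultiples {N : ℕ} {v : ℝ}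
    (hv : v ∈ AddSubgroup.zmultiples (N : ℝ)⁻¹) : ∃ r : ℚ, v = r := by
  obtain ⟨k, rfl⟩ := AddSubgroup.mem_zmultiples_iff.1 hv
  exact ⟨k • (N : ℚ)⁻¹, by push_cast [zsmul_eq_mul]; rfl⟩

section Subgroup

variable {ι κ : Type*} [Finite ι] [Finite κ] {s : κ → U}

theorem exists_fix_distProfile_comp_eq (hrat : IsRationalMetric U)
    (huniv : IsRationalUniversal U) (hhomog : IsUltrahomogeneous U) {I : Finset κ}
    {x : ι → U} {f : ι → κ → ℝ} (hf : IsConf s x f) (hfq : ∀ j i, ∃ r : ℚ, f j i = r) {z : ι → U}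
    (hzx : ∀ j k, dist (z j) (z k) = dist (x j) (x k))
    (hzf : ∀ j, ∀ i ∈ I, dist (z j) (s i) = f j i) :
    ∃ σ : U ≃ᵢ U, (∀ i ∈ I, σ (s i) = s i) ∧ distProfile s (σ ∘ z) = f := by
  obtain ⟨z', hz', hz'x⟩ := exists_distProfile_eq hrat huniv hhomog hf hfq
  obtain ⟨σ, hσI, hσz⟩ := hhomog.exists_fix_apply_eq s I (z := z) (z' := z')
    (fun j k => by rw [hz'x, hzx]) fun j i hi => by rw [hzf j i hi, ← hz', distProfile_apply]
  refine ⟨σ, hσI, ?_⟩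
  rw [← hz']
  exact congrArg (distProfile s) (funext hσz)

variable [DecidableEq κ] {IA IB : Finset κ} {H : Subgroup (U ≃ᵢ U)} {N : ℕ}

theorem exists_mem_distProfile_comp_eq_pushConf (hrat : IsRationalMetric U)
    (huniv : IsRationalUniversal U) (hhomog : IsUltrahomogeneous U) (hs : Function.Injective s)
    (hH : ∀ σ : U ≃ᵢ U, (∀ i ∈ IA, σ (s i) = s i) ∨ (∀ i ∈ IB, σ (s i) = s i) → σ ∈ H)
    {R : ℝ} (hR : R ∈ AddSubgroup.zmultiples (N : ℝ)⁻¹)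
    (hs_grid : ∀ a i, dist (s a) (s i) ∈ AddSubgroup.zmultiples (N : ℝ)⁻¹) {x : ι → U}
    {f : ι → κ → ℝ} (hf : Admissible s x (IA ∩ IB) R (N : ℝ)⁻¹ f) {z : ι → U}
    (hzx : ∀ j k, dist (z j) (z k) = dist (x j) (x k)) (hz : distProfile s z = f) :
    ∃ h ∈ H, distProfile s (h ∘ z) = pushConf s R (IA ∩ IB) f := by
  have hwf : {f | Admissible s x (IA ∩ IB) R (N : ℝ)⁻¹ f}.WellFoundedOn (· > ·) :=
    (finite_setOf_admissible _ _ _).wellFoundedOn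
  revert z
  refine hwf.induction hf (P := fun f => ∀ {z : ι → U},
    (∀ j k, dist (z j) (z k) = dist (x j) (x k)) → distProfile s z = f →
    ∃ h ∈ H, distProfile s (h ∘ z) = pushConf s R (IA ∩ IB) f) ?_
  intro f (hf : Admissible s x _ R _ f) ih z hzx hz
  have hlip := hf.isConf.le_add_dist
  by_cases hfix : pushConf s R IA f = f ∧ pushConf s R IB f = f
  · refine ⟨1, one_mem H, ?_⟩
    rw [pushConf_inter_eq_self hs hlip hf.le_cap hfix.1 hfix.2, ← hz]
    rfl
  obtain ⟨I, hCI, hIH, hne⟩ : ∃ I, IA ∩ IB ⊆ I ∧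
      (∀ σ : U ≃ᵢ U, (∀ i ∈ I, σ (s i) = s i) → σ ∈ H) ∧ pushConf s R I f ≠ f := by
    rcases not_and_or.1 hfix with h | h
    · exact ⟨IA, inter_subset_left, fun σ hσ => hH σ (.inl hσ), h⟩
    · exact ⟨IB, inter_subset_right, fun σ hσ => hH σ (.inr hσ), h⟩
  have hf' := hf.pushConf hCI hR hs_grid
  obtain ⟨σ, hσI, hσz⟩ := exists_fix_distProfile_comp_eq hrat huniv hhomog hf'.isConf
    (fun j i => exists_rat_eq_of_mem_zmultiples (hf'.mem_grid j i)) hzx fun j i hi => by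
      rw [pushConf_eq_of_mem hlip hf.le_cap hi, ← hz, distProfile_apply]
  obtain ⟨h, hh, hprof⟩ := ih _ hf' (lt_of_le_of_ne (le_pushConf hlip hf.le_cap) (Ne.symm hne))
    (fun j k => (σ.dist_eq _ _).trans (hzx j k)) hσz
  refine ⟨h * σ, mul_mem hh (hIH σ hσI), hprof.trans ?_⟩
  exact pushConf_congr fun j i hi => pushConf_eq_of_mem hlip hf.le_cap (hCI hi) j

theorem exists_mem_apply_eq (hrat : IsRationalMetric U) (huniv : IsRationalUniversal U)
    (hhomog : IsUltrahomogeneous U) (hs : Function.Injective s)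
    (hH : ∀ σ : U ≃ᵢ U, (∀ i ∈ IA, σ (s i) = s i) ∨ (∀ i ∈ IB, σ (s i) = s i) → σ ∈ H)
    {x y : ι → U} (hxy : ∀ j k, dist (y j) (y k) = dist (x j) (x k))
    (hC : ∀ j, ∀ c ∈ IA ∩ IB, dist (y j) (s c) = dist (x j) (s c))
    (hs_grid : ∀ a i, dist (s a) (s i) ∈ AddSubgroup.zmultiples (N : ℝ)⁻¹)
    (hx_grid : ∀ j i, dist (x j) (s i) ∈ AddSubgroup.zmultiples (N : ℝ)⁻¹)
    (hy_grid : ∀ j i, dist (y j) (s i) ∈ AddSubgroup.zmultiples (N : ℝ)⁻¹) :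
    ∃ h ∈ H, ∀ j, h (x j) = y j := by
  have := Fintype.ofFinite ι
  have := Fintype.ofFinite κ
  -- a truncation height on the grid above all distances from `x` and `y` to `s`
  set R := ∑ j, ∑ i, (dist (x j) (s i) + dist (y j) (s i))
  have hR : R ∈ AddSubgroup.zmultiples (N : ℝ)⁻¹ :=
    sum_mem fun j _ => sum_mem fun i _ => add_mem (hx_grid j i) (hy_grid j i)
  have hle (j : ι) (i : κ) : dist (x j) (s i) + dist (y j) (s i) ≤ R :=
    (single_le_sum (fun i _ => by positivity) (mem_univ i)).trans
      (single_le_sum (f := fun j => ∑ i, (dist (x j) (s i) + dist (y j) (s i)))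
        (fun j _ => by positivity) (mem_univ j))
  obtain ⟨h₁, hh₁, hx⟩ := exists_mem_distProfile_comp_eq_pushConf hrat huniv hhomog hs hH hR
    hs_grid (x := x) ⟨isConf_distProfile s x fun _ _ => rfl,
      fun j i => by rw [distProfile_apply]; linarith [hle j i, dist_nonneg (x := y j) (y := s i)],
      fun _ _ _ => rfl, hx_grid⟩ (fun _ _ => rfl) rfl
  obtain ⟨h₂, hh₂, hy⟩ := exists_mem_distProfile_comp_eq_pushConf hrat huniv hhomog hs hH hR
    hs_grid (x := x) ⟨isConf_distProfile s x hxy,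
      fun j i => by rw [distProfile_apply]; linarith [hle j i, dist_nonneg (x := x j) (y := s i)],
      hC, hy_grid⟩ hxy rfl
  rw [pushConf_congr (f := distProfile s y) (f' := distProfile s x) hC, ← hx] at hy
  obtain ⟨τ, hτs, hτ⟩ := hhomog.exists_fix_apply_eq s univ (z := h₁ ∘ x) (z' := h₂ ∘ y)
    (fun j k => by simp only [Function.comp_apply, IsometryEquiv.dist_eq, hxy])
    fun j i _ => congrFun (congrFun hy j) i
  refine ⟨h₂⁻¹ * τ * h₁,
    mul_mem (mul_mem (inv_mem hh₂) (hH τ (.inl fun i _ => hτs i (mem_univ i)))) hh₁, fun j => ?_⟩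
  calc (h₂⁻¹ * τ * h₁) (x j) = h₂⁻¹ (h₂ (y j)) := congrArg (⇑h₂⁻¹) (hτ j)
    _ = y j := h₂.inv_apply_self (y j)

end Subgroup

def pointwiseStabilizer (T : Set U) : Subgroup (U ≃ᵢ U) where
  carrier := {g | ∀ x ∈ T, g x = x}
  mul_mem' hg hh x hx := by rw [IsometryEquiv.mul_apply, hh x hx, hg x hx]
  one_mem' _ _ := rfl
  inv_mem' hg x hx := by rw [← hg x hx, IsometryEquiv.inv_apply_self, hg x hx]

@[simp]
theorem mem_pointwiseStabilizer {T : Set U} {g : U ≃ᵢ U} :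
    g ∈ pointwiseStabilizer T ↔ ∀ x ∈ T, g x = x :=
  Iff.rfl

theorem exists_mem_closure_apply_eq (hrat : IsRationalMetric U) (huniv : IsRationalUniversal U)
    (hhomog : IsUltrahomogeneous U) {A B : Finset U} {g : U ≃ᵢ U}
    (hg : g ∈ pointwiseStabilizer ((A : Set U) ∩ B)) (F : Finset U) :
    ∃ h ∈ Subgroup.closure
      ((pointwiseStabilizer (A : Set U) : Set (U ≃ᵢ U)) ∪ pointwiseStabilizer (B : Set U)),
      ∀ u ∈ F, h u = g u := by
  classical
  obtain ⟨N, hN⟩ := hrat.exists_dist_mem_zmultiples (A ∪ B ∪ F ∪ F.image g)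
  have hS (a : (A ∪ B : Finset U)) : (a : U) ∈ A ∪ B ∪ F ∪ F.image g :=
    mem_union_left _ (mem_union_left _ a.2)
  have hF (j : F) : (j : U) ∈ A ∪ B ∪ F ∪ F.image g := mem_union_left _ (mem_union_right _ j.2)
  have hgF (j : F) : g j ∈ A ∪ B ∪ F ∪ F.image g := mem_union_right _ (mem_image_of_mem g j.2)
  obtain ⟨h, hH, hx⟩ := exists_mem_apply_eq hrat huniv hhomog (N := N)
    (s := ((↑) : (A ∪ B : Finset U) → U)) Subtype.val_injective
    (IA := A.subtype (· ∈ A ∪ B)) (IB := B.subtype (· ∈ A ∪ B))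
    (H := Subgroup.closure
      ((pointwiseStabilizer (A : Set U) : Set (U ≃ᵢ U)) ∪ pointwiseStabilizer (B : Set U)))
    (fun σ hσ => Subgroup.subset_closure <| by
      rcases hσ with hσ | hσ
      · exact Or.inl fun u hu => hσ ⟨u, mem_union_left _ hu⟩ (mem_subtype.2 hu)
      · exact Or.inr fun u hu => hσ ⟨u, mem_union_right _ hu⟩ (mem_subtype.2 hu))
    (x := ((↑) : F → U)) (y := fun j => g j) (fun j k => g.dist_eq _ _)
    (fun j c hc => by
      have hc' : (c : U) ∈ (A : Set U) ∩ B := by simpa using hc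
      simpa only [hg c hc'] using g.dist_eq j c)
    (fun a i => hN _ (hS a) _ (hS i)) (fun j i => hN _ (hF j) _ (hS i))
    (fun j i => hN _ (hgF j) _ (hS i))
  exact ⟨h, hH, fun u hu => hx ⟨u, hu⟩⟩

@[reducible] def pointwiseTopology (U : Type*) [MetricSpace U] : TopologicalSpace (U ≃ᵢ U) :=
  TopologicalSpace.induced (fun f : U ≃ᵢ U => ((⇑f, ⇑f.symm) : (U → U) × (U → U)))
    (@instTopologicalSpaceProd _ _ (@Pi.topologicalSpace U (fun _ => U) (fun _ => ⊥))
      (@Pi.topologicalSpace U (fun _ => U) (fun _ => ⊥)))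

open Topology in
theorem isClosed_pointwiseStabilizer (T : Set U) :
    IsClosed[pointwiseTopology U] (pointwiseStabilizer T : Set (U ≃ᵢ U)) := by
  let : TopologicalSpace U := ⊥
  have : DiscreteTopology U := ⟨rfl⟩
  let := pointwiseTopology U
  have hcont (x : U) : Continuous fun g : U ≃ᵢ U => g x :=
    ((continuous_apply x).comp continuous_fst).comp
      (continuous_induced_dom (f := fun f : U ≃ᵢ U => ((⇑f, ⇑f.symm) : (U → U) × (U → U))))
  have : (pointwiseStabilizer T : Set (U ≃ᵢ U)) = ⋂ x ∈ T, (fun g : U ≃ᵢ U => g x) ⁻¹' {x} := by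
    ext; simp
  rw [this]
  exact isClosed_biInter fun x _ => (isClosed_discrete {x}).preimage (hcont x)

open Topology in
theorem exists_finset_forall_mem_of_mem_nhds {α β : Type*} [TopologicalSpace β]
    [DiscreteTopology β] {a : α → β} {t : Set (α → β)} (ht : t ∈ 𝓝 a) :
    ∃ I : Finset α, ∀ f : α → β, (∀ u ∈ I, f u = a u) → f ∈ t := by
  rw [nhds_pi, Filter.mem_pi'] at ht
  obtain ⟨I, t', ht', hsub⟩ := ht
  exact ⟨I, fun f hf => hsub fun u hu => by rw [hf u hu]; exact mem_of_mem_nhds (ht' u)⟩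

open Topology in
theorem mem_closure_of_forall_finset {S : Set (U ≃ᵢ U)} {g : U ≃ᵢ U}
    (h : ∀ F : Finset U, ∃ g' ∈ S, ∀ u ∈ F, g' u = g u) : g ∈ closure[pointwiseTopology U] S := by
  let : TopologicalSpace U := ⊥
  have : DiscreteTopology U := ⟨rfl⟩
  rw [closure_induced, mem_closure_iff_nhds]
  intro t ht
  rw [nhds_prod_eq] at ht
  obtain ⟨t₁, ht₁, t₂, ht₂, hsub⟩ := Filter.mem_prod_iff.1 ht
  obtain ⟨I₁, hI₁⟩ := exists_finset_forall_mem_of_mem_nhds ht₁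
  obtain ⟨I₂, hI₂⟩ := exists_finset_forall_mem_of_mem_nhds ht₂
  classical
  obtain ⟨g', hg'S, hg'⟩ := h (I₁ ∪ I₂.image g.symm)
  refine ⟨_, hsub ⟨hI₁ _ fun u hu => hg' u (mem_union_left _ hu), hI₂ _ fun u hu => ?_⟩,
    g', hg'S, rfl⟩
  rw [g'.symm_apply_eq, hg' _ (mem_union_right _ (mem_image_of_mem _ hu)), g.apply_symm_apply]

end RationalUrysohn

theorem rational_urysohn_stabilizer_closure_general
    (U : Type*) [MetricSpace U]
    (hrat : ∀ x y : U, ∃ r : ℚ, dist x y = (r : ℝ))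
    (huniv : ∀ (X : Type) (_ : MetricSpace X) (_ : Finite X),
      (∀ x y : X, ∃ r : ℚ, dist x y = (r : ℝ)) → ∃ f : X → U, Isometry f)
    (hhomog : ∀ (s : Finset U) (f : U → U),
      (∀ x ∈ s, ∀ y ∈ s, dist (f x) (f y) = dist x y) →
      ∃ g : U ≃ᵢ U, ∀ x ∈ s, g x = f x)
    (A B : Finset U) :
    {g : U ≃ᵢ U | ∀ x ∈ (A : Set U) ∩ (B : Set U), g x = x} =
      @closure _
        (TopologicalSpace.induced
          (fun f : U ≃ᵢ U => ((⇑f, ⇑f.symm) : (U → U) × (U → U)))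
          (@instTopologicalSpaceProd _ _
            (@Pi.topologicalSpace U (fun _ => U) (fun _ => ⊥))
            (@Pi.topologicalSpace U (fun _ => U) (fun _ => ⊥))))
        (↑(Subgroup.closure
          ({g : U ≃ᵢ U | ∀ x ∈ A, g x = x} ∪ {g : U ≃ᵢ U | ∀ x ∈ B, g x = x}))) := by
  refine Set.Subset.antisymm (fun g hg => ?_) ?_
  · exact RationalUrysohn.mem_closure_of_forall_finset
      (RationalUrysohn.exists_mem_closure_apply_eq hrat huniv hhomog hg)
  · refine @closure_minimal _ (RationalUrysohn.pointwiseTopology U) _ _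
      ((Subgroup.closure_le (RationalUrysohn.pointwiseStabilizer _)).2 ?_)
      (RationalUrysohn.isClosed_pointwiseStabilizer _)
    exact Set.union_subset (fun g hg x hx => hg x hx.1) fun g hg x hx => hg x hx.2

/-- Corollary to Theorem 14 for the rational Urysohn space `U`: a countable metric space
with rational distances, universal for finite metric spaces with rational distances and
ultrahomogeneous. With the topology of pointwise convergence (`U` discrete) on `Iso(U)`,
the pointwise stabilizer of `A ∩ B` is the closure of the subgroup generated by the
stabilizers of `A` and of `B`. -/
theorem rational_urysohn_stabilizer_closure
    (U : Type*) [MetricSpace U] [Countable U]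
    (hrat : ∀ x y : U, ∃ r : ℚ, dist x y = (r : ℝ))
    (huniv : ∀ (X : Type) (_ : MetricSpace X) (_ : Finite X),
      (∀ x y : X, ∃ r : ℚ, dist x y = (r : ℝ)) → ∃ f : X → U, Isometry f)
    (hhomog : ∀ (s : Finset U) (f : U → U),
      (∀ x ∈ s, ∀ y ∈ s, dist (f x) (f y) = dist x y) →
      ∃ g : U ≃ᵢ U, ∀ x ∈ s, g x = f x)
    (A B : Finset U) :
    {g : U ≃ᵢ U | ∀ x ∈ (A : Set U) ∩ (B : Set U), g x = x} =
      @closure _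
        (TopologicalSpace.induced
          (fun f : U ≃ᵢ U => ((⇑f, ⇑f.symm) : (U → U) × (U → U)))
          (@instTopologicalSpaceProd _ _
            (@Pi.topologicalSpace U (fun _ => U) (fun _ => ⊥))
            (@Pi.topologicalSpace U (fun _ => U) (fun _ => ⊥))))
        (↑(Subgroup.closure
          ({g : U ≃ᵢ U | ∀ x ∈ A, g x = x} ∪ {g : U ≃ᵢ U | ∀ x ∈ B, g x = x}))) :=
  rational_urysohn_stabilizer_closure_general U hrat huniv hhomog A B
end

section
/- If 𝕂 is a countable structure equipped with a linear order preserved by all automorphisms, and Aut(𝕂) ≠ {id} carries the topology of pointwise convergence (𝕂 discrete), then Aut(𝕂) has exactly two classes of topological similarity of single elements: the class {id}, and the class of all non-trivial automorphisms. In particular, every non-trivial g ∈ Aut(𝕂) generates a discrete subgroup isomorphic to ℤ. -/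
/-!
A non-identity order automorphism `g` moves some point `a`, say `a < g a`; since every
power of `g` is again strictly monotone, the orbit `n ↦ gⁿ a` is strictly monotone on `ℤ`.
Hence `g` has infinite order, and evaluation at `a`, which is continuous for the pointwise
topology with `K` discrete, is injective on `⟨g⟩`, so `⟨g⟩` is discrete. Any isomorphism of
discrete infinite cyclic groups matching the generators is then a homeomorphism, while an
isomorphism `⟨1⟩ ≃* ⟨g⟩` forces `g = 1`.
-/

/-- The topology of pointwise convergence (with `K` discrete) on the permutation group
of `K`, induced by `f ↦ (f, f⁻¹)`. -/
def permTop (K : Type*) : TopologicalSpace (Equiv.Perm K) :=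
  TopologicalSpace.induced
    (fun f : Equiv.Perm K => ((⇑f, ⇑f.symm) : (K → K) × (K → K)))
    (@instTopologicalSpaceProd _ _
      (@Pi.topologicalSpace K (fun _ => K) (fun _ => ⊥))
      (@Pi.topologicalSpace K (fun _ => K) (fun _ => ⊥)))

/-- The subspace topology on an automorphism group `G ≤ Perm K`. -/
def subTop {K : Type*} (G : Subgroup (Equiv.Perm K)) : TopologicalSpace G :=
  TopologicalSpace.induced Subtype.val (permTop K)

/-- Topological similarity of single elements: `g ↦ h` extends to a bi-continuous
isomorphism `⟨g⟩ → ⟨h⟩` (subspace topologies). -/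
def TopSimilarOne {K : Type*} (G : Subgroup (Equiv.Perm K)) (g h : G) : Prop :=
  letI := subTop G
  ∃ φ : Subgroup.zpowers g ≃* Subgroup.zpowers h,
    Continuous φ ∧ Continuous φ.symm ∧
      (φ ⟨g, Subgroup.mem_zpowers g⟩ : G) = h

open Function Subgroup

namespace Equiv.Perm

variable {α : Type*} [LinearOrder α] {f : Perm α}

theorem strictMono_inv (hf : StrictMono f) : StrictMono ⇑f⁻¹ :=
  fun x y hxy => hf.lt_iff_lt.mp (by simpa using hxy)

theorem strictMono_zpow (hf : StrictMono f) : ∀ n : ℤ, StrictMono ⇑(f ^ n)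
  | (n : ℕ) => by rw [zpow_natCast, coe_pow]; exact hf.iterate n
  | .negSucc n => by rw [zpow_negSucc, ← inv_pow, coe_pow]; exact (strictMono_inv hf).iterate _

theorem strictMono_zpow_apply (hf : StrictMono f) {a : α} (ha : a < f a) :
    StrictMono fun n : ℤ => (f ^ n) a :=
  strictMono_int_of_lt_succ fun n => by
    rw [zpow_add_one, mul_apply]; exact strictMono_zpow hf n ha

theorem strictAnti_zpow_apply (hf : StrictMono f) {a : α} (ha : f a < a) :
    StrictAnti fun n : ℤ => (f ^ n) a :=
  strictAnti_int_of_succ_lt fun n => by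
    rw [zpow_add_one, mul_apply]; exact strictMono_zpow hf n ha

theorem injective_zpow_apply_of_strictMono (hf : StrictMono f) {a : α} (ha : f a ≠ a) :
    Injective fun n : ℤ => (f ^ n) a :=
  ha.lt_or_gt.elim (fun h => (strictAnti_zpow_apply hf h).injective)
    fun h => (strictMono_zpow_apply hf h).injective

end Equiv.Perm

section InfiniteOrder

variable {M : Type*} [Group M] {x y : M}

noncomputable def mulEquivZPowersOfNotIsOfFinOrder (hx : ¬IsOfFinOrder x) :
    Multiplicative ℤ ≃* zpowers x :=
  MonoidHom.ofInjective (f := zpowersHom M x) (injective_zpow_iff_not_isOfFinOrder.mpr hx)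

theorem mulEquivZPowersOfNotIsOfFinOrder_ofAdd_one (hx : ¬IsOfFinOrder x) :
    mulEquivZPowersOfNotIsOfFinOrder hx (Multiplicative.ofAdd 1) = ⟨x, mem_zpowers x⟩ :=
  Subtype.ext (zpow_one x)

noncomputable def zpowersMulEquivOfNotIsOfFinOrder (hx : ¬IsOfFinOrder x)
    (hy : ¬IsOfFinOrder y) :
    zpowers x ≃* zpowers y :=
  (mulEquivZPowersOfNotIsOfFinOrder hx).symm.trans (mulEquivZPowersOfNotIsOfFinOrder hy)

theorem zpowersMulEquivOfNotIsOfFinOrder_apply_self (hx : ¬IsOfFinOrder x)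
    (hy : ¬IsOfFinOrder y) :
    zpowersMulEquivOfNotIsOfFinOrder hx hy ⟨x, mem_zpowers x⟩ = ⟨y, mem_zpowers y⟩ := by
  rw [zpowersMulEquivOfNotIsOfFinOrder, MulEquiv.trans_apply,
    ← mulEquivZPowersOfNotIsOfFinOrder_ofAdd_one hx, MulEquiv.symm_apply_apply,
    mulEquivZPowersOfNotIsOfFinOrder_ofAdd_one]

end InfiniteOrder

section PermTop

variable {K : Type*}

theorem continuous_apply_permTop (a : K) :
    @Continuous _ _ (permTop K) ⊥ fun f : Equiv.Perm K => f a := by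
  let _ : TopologicalSpace K := ⊥
  let _ := permTop K
  have hpair : Continuous fun f : Equiv.Perm K => (⇑f, ⇑f.symm) := continuous_induced_dom
  exact (continuous_apply a).comp hpair.fst

theorem discreteTopology_zpowers_of_injective_zpow_apply {G : Subgroup (Equiv.Perm K)} (g : G)
    {a : K} (ha : Injective fun n : ℤ => ((g : Equiv.Perm K) ^ n) a) :
    @DiscreteTopology (zpowers g) (TopologicalSpace.induced Subtype.val (subTop G)) := by
  let _ : TopologicalSpace K := ⊥
  have : DiscreteTopology K := ⟨rfl⟩
  let _ := permTop K
  let _ := subTop G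
  refine DiscreteTopology.of_continuous_injective (f := fun y : zpowers g => (y : Equiv.Perm K) a)
    ((continuous_apply_permTop a).comp (continuous_induced_dom.comp continuous_induced_dom)) ?_
  rintro ⟨_, m, rfl⟩ ⟨_, n, rfl⟩ h
  simp only [coe_zpow] at h
  rw [ha h]

theorem TopSimilarOne.of_discreteTopology {G : Subgroup (Equiv.Perm K)} {g h : G}
    (hg : ¬IsOfFinOrder g) (hh : ¬IsOfFinOrder h)
    (dg : @DiscreteTopology (zpowers g) (TopologicalSpace.induced Subtype.val (subTop G)))
    (dh : @DiscreteTopology (zpowers h) (TopologicalSpace.induced Subtype.val (subTop G))) :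
    TopSimilarOne G g h :=
  letI := subTop G
  ⟨zpowersMulEquivOfNotIsOfFinOrder hg hh, continuous_of_discreteTopology,
    continuous_of_discreteTopology,
    congrArg Subtype.val (zpowersMulEquivOfNotIsOfFinOrder_apply_self hg hh)⟩

theorem TopSimilarOne.eq_one {G : Subgroup (Equiv.Perm K)} {g : G} (h : TopSimilarOne G 1 g) :
    g = 1 := by
  obtain ⟨φ, -, -, hφ⟩ := h
  exact hφ.symm.trans (congrArg Subtype.val (map_one φ))

end PermTop

section OrderPreserving

variable {K : Type*} {G : Subgroup (Equiv.Perm K)}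

theorem not_isOfFinOrder_of_injective_zpow_apply {g : G} {a : K}
    (ha : Injective fun n : ℤ => ((g : Equiv.Perm K) ^ n) a) : ¬IsOfFinOrder g :=
  injective_zpow_iff_not_isOfFinOrder.mp <|
    Injective.of_comp (f := fun y : G => (y : Equiv.Perm K) a) ha

theorem exists_injective_zpow_apply [LinearOrder K] (hmono : ∀ f ∈ G, StrictMono ⇑f) {g : G}
    (hg : g ≠ 1) : ∃ a : K, Injective fun n : ℤ => ((g : Equiv.Perm K) ^ n) a := by
  obtain ⟨a, ha⟩ : ∃ a, (g : Equiv.Perm K) a ≠ a := by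
    by_contra! h
    exact hg (Subtype.ext (Equiv.ext h))
  exact ⟨a, Equiv.Perm.injective_zpow_apply_of_strictMono (hmono g g.2) ha⟩

end OrderPreserving

theorem two_similarity_classes_ordered_structure_general
    (K : Type*) [LinearOrder K]
    (G : Subgroup (Equiv.Perm K))
    (hmono : ∀ f ∈ G, StrictMono ⇑f) :
    (∀ g h : G, g ≠ 1 → h ≠ 1 → TopSimilarOne G g h) ∧
    (∀ g : G, g ≠ 1 → ¬ TopSimilarOne G 1 g) ∧
    (∀ g : G, g ≠ 1 →
      (@DiscreteTopology (Subgroup.zpowers g)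
        (TopologicalSpace.induced Subtype.val (subTop G))) ∧
      Nonempty (Multiplicative ℤ ≃* Subgroup.zpowers g)) := by
  have infinite_discrete : ∀ g : G, g ≠ 1 → ¬IsOfFinOrder g ∧
      @DiscreteTopology (zpowers g) (TopologicalSpace.induced Subtype.val (subTop G)) := by
    intro g hg
    obtain ⟨a, ha⟩ := exists_injective_zpow_apply hmono hg
    exact ⟨not_isOfFinOrder_of_injective_zpow_apply ha,
      discreteTopology_zpowers_of_injective_zpow_apply g ha⟩
  refine ⟨fun g h hg hh => ?_, fun g hg hsim => hg hsim.eq_one, fun g hg => ?_⟩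
  · obtain ⟨hg, dg⟩ := infinite_discrete g hg
    obtain ⟨hh, dh⟩ := infinite_discrete h hh
    exact TopSimilarOne.of_discreteTopology hg hh dg dh
  · obtain ⟨hg, dg⟩ := infinite_discrete g hg
    exact ⟨dg, ⟨mulEquivZPowersOfNotIsOfFinOrder hg⟩⟩

/-- If `𝕂` is a countable structure with a linear order preserved by all automorphisms
and `Aut(𝕂) ≠ {1}` (pointwise convergence topology, `𝕂` discrete), then `Aut(𝕂)` has
exactly two one-dimensional topological similarity classes — `{1}` and the class of all
non-trivial automorphisms — and every non-trivial automorphism generates a discrete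
subgroup isomorphic to `ℤ`. -/
theorem two_similarity_classes_ordered_structure
    (K : Type*) [Countable K] [LinearOrder K]
    (G : Subgroup (Equiv.Perm K))
    (hmono : ∀ f ∈ G, StrictMono ⇑f)
    (hG : G ≠ ⊥) :
    (∀ g h : G, g ≠ 1 → h ≠ 1 → TopSimilarOne G g h) ∧
    (∀ g : G, g ≠ 1 → ¬ TopSimilarOne G 1 g) ∧
    (∀ g : G, g ≠ 1 →
      (@DiscreteTopology (Subgroup.zpowers g)
        (TopologicalSpace.induced Subtype.val (subTop G))) ∧
      Nonempty (Multiplicative ℤ ≃* Subgroup.zpowers g)) :=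
  two_similarity_classes_ordered_structure_general K G hmono
end

section
/- Growth of distances under alternating extensions (Claim 3 of Theorem 10): in the setting of the inductive construction of Theorem 10, let x ∈ fix(p) △ fix(q) and c ∈ A, and suppose that the distance between w_i(c) and x does not pass through any point of fix(p) ∩ fix(q). Then d(w_i(c), x) ≥ ⌊i/2⌋ · den(A). -/
/-!
Call the distance from `w_i(c)` to `x` *free* if it passes through no common fixed point. A
step extending `p` leaves the free distances to points of `fix p \ fix q` unchanged, while a
free distance to a point `x ∈ fix q \ fix p` now passes through some `z ∈ fix p`; then `z` lies
outside `fix q`, the distance to `z` was already free before the step, and `d(z, x) ≥ den(A)`.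
So each step adds `den(A)` to the bound on the side it does not extend, and a step extending
`q` does the same with the roles swapped. Tracking `⌊i/2⌋` on the `fix p` side and `⌈i/2⌉` on
the `fix q` side gives the claim.
-/

open Set

section

variable {X : Type*} [PseudoMetricSpace X]

def PassesThrough (a x : X) (C : Set X) : Prop :=
  ∃ z ∈ C, dist a x = dist a z + dist z x

theorem passesThrough_congr {a b x : X} {C : Set X} (hx : dist b x = dist a x)
    (hC : ∀ w ∈ C, dist b w = dist a w) : PassesThrough b x C ↔ PassesThrough a x C := by
  unfold PassesThrough
  exact exists_congr fun w => and_congr_right fun hw => by rw [hx, hC w hw]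

theorem PassesThrough.of_dist_eq_add {b x z : X} {C : Set X}
    (hz : dist b x = dist b z + dist z x) (h : PassesThrough b z C) : PassesThrough b x C := by
  obtain ⟨w, hw, hbz⟩ := h
  refine ⟨w, hw, le_antisymm (dist_triangle _ _ _) ?_⟩
  calc dist b w + dist w x ≤ dist b w + (dist w z + dist z x) := by
        gcongr; exact dist_triangle _ _ _
    _ = dist b x := by rw [hz, hbz, add_assoc]

def SideBound (a : X) (S C : Set X) (r : ℝ) : Prop :=
  ∀ x ∈ S \ C, ¬ PassesThrough a x C → r ≤ dist a x

theorem SideBound.mono {a : X} {S C : Set X} {r r' : ℝ} (h : SideBound a S C r) (hr : r' ≤ r) :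
    SideBound a S C r' :=
  fun x hx hfree => hr.trans (h x hx hfree)

/-- A step `a ↦ b` of the construction that extends the map with fixed-point set `S`, i.e. a free
amalgam over `S`. -/
def IsFreeStep (S T : Set X) (a b : X) : Prop :=
  (∀ z ∈ S, dist b z = dist a z) ∧ ∀ x ∈ T, PassesThrough b x S

variable {S T C : Set X} {a b : X} {r δ : ℝ}

theorem SideBound.of_isFreeStep (h : SideBound a S C r) (hstep : IsFreeStep S T a b)
    (hCS : C ⊆ S) : SideBound b S C r := by
  intro x hx hfree
  have hdist := hstep.1 x hx.1
  rw [hdist]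
  exact h x hx fun hpass =>
    hfree ((passesThrough_congr hdist fun w hw => hstep.1 w (hCS hw)).2 hpass)

theorem SideBound.add_of_isFreeStep (h : SideBound a S C r) (hstep : IsFreeStep S T a b)
    (hCS : C ⊆ S) (hST : S ∩ T ⊆ C) (hsep : ∀ z ∈ S, ∀ x ∈ T, z ≠ x → δ ≤ dist z x) :
    SideBound b T C (r + δ) := by
  rintro x ⟨hxT, hxC⟩ hfree
  obtain ⟨z, hzS, hbx⟩ := hstep.2 x hxT
  have hzC : z ∉ C := fun hz => hfree ⟨z, hz, hbx⟩
  have hzx : z ≠ x := by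
    rintro rfl
    exact hzC (hST ⟨hzS, hxT⟩)
  have hz_free : ¬ PassesThrough a z C := fun hpass =>
    hfree <| PassesThrough.of_dist_eq_add hbx <|
      (passesThrough_congr (hstep.1 z hzS) fun w hw => hstep.1 w (hCS hw)).2 hpass
  calc r + δ ≤ dist a z + dist z x :=
        add_le_add (h z ⟨hzS, hzC⟩ hz_free) (hsep z hzS x hxT hzx)
    _ = dist b x := by rw [hbx, hstep.1 z hzS]

end

/-- Claim 3 of Theorem 10 (growth of distances under alternating free extensions),
stated with the structural properties of the inductive construction as hypotheses.
`Fp`, `Fq` are the fixed-point sets of the partial isometries `p`, `q`, `δ = den(A)` is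
the minimal positive distance of `A`, and `y i = w_i(c)` is the image of `c ∈ A` after
the `i`-th step. Odd steps extend `p` (so distances to `Fp` are unchanged and distances
from the new point to old points pass through `Fp`, by free amalgamation over `Fp`);
even steps do the same with `q` and `Fq`. If the distance from `w_i(c)` to a point
`x ∈ Fp △ Fq` passes through no common fixed point, then `d(w_i(c),x) ≥ ⌊i/2⌋·den(A)`. -/
theorem claim3_growth_of_distances
    {X : Type*} [MetricSpace X] (Fp Fq : Set X) (δ : ℝ) (hδ : 0 < δ)
    -- distinct points of `Fp ∪ Fq` are at distance at least `δ = den(A)`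
    (hsep : ∀ z ∈ Fp ∪ Fq, ∀ z' ∈ Fp ∪ Fq, z ≠ z' → δ ≤ dist z z')
    (y : ℕ → X)
    -- odd steps: distances to `Fp` are preserved, and distances from the new point
    -- to `Fp ∪ Fq` pass through a point of `Fp` (free amalgamation over `fix p̄`)
    (hodd : ∀ i : ℕ, Odd (i + 1) →
      (∀ z ∈ Fp, dist (y (i + 1)) z = dist (y i) z) ∧
      (∀ x ∈ Fp ∪ Fq, ∃ z ∈ Fp, dist (y (i + 1)) x = dist (y (i + 1)) z + dist z x))
    -- even steps: the same with the roles of `p` and `q` interchanged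
    (heven : ∀ i : ℕ, Even (i + 1) →
      (∀ z ∈ Fq, dist (y (i + 1)) z = dist (y i) z) ∧
      (∀ x ∈ Fp ∪ Fq, ∃ z ∈ Fq, dist (y (i + 1)) x = dist (y (i + 1)) z + dist z x)) :
    ∀ i : ℕ, ∀ x ∈ symmDiff Fp Fq,
      (¬ ∃ z ∈ Fp ∩ Fq, dist (y i) x = dist (y i) z + dist z x) →
      ((i / 2 : ℕ) : ℝ) * δ ≤ dist (y i) x := by
  have scale {m n : ℕ} (h : m ≤ n) : (m : ℝ) * δ ≤ n * δ := by gcongr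
  have scale_succ {m n : ℕ} (h : m ≤ n + 1) : (m : ℝ) * δ ≤ n * δ + δ := by
    simpa [add_mul] using scale h
  have key (i : ℕ) : SideBound (y i) Fp (Fp ∩ Fq) ((i / 2 : ℕ) * δ) ∧
      SideBound (y i) Fq (Fp ∩ Fq) (((i + 1) / 2 : ℕ) * δ) := by
    induction i with
    | zero => simp [SideBound]
    | succ i ih =>
      rcases Nat.even_or_odd (i + 1) with he | ho
      · have hstep : IsFreeStep Fq Fp (y i) (y (i + 1)) :=
          ⟨(heven i he).1, fun x hx => (heven i he).2 x (.inl hx)⟩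
        have hi : (i + 1 + 1) / 2 ≤ (i + 1) / 2 := by obtain ⟨k, hk⟩ := he; omega
        exact ⟨(ih.2.add_of_isFreeStep hstep inter_subset_right (inter_comm Fq Fp).le
            fun z hz x hx => hsep z (.inr hz) x (.inl hx)).mono (scale_succ (by omega)),
          (ih.2.of_isFreeStep hstep inter_subset_right).mono (scale hi)⟩
      · have hstep : IsFreeStep Fp Fq (y i) (y (i + 1)) :=
          ⟨(hodd i ho).1, fun x hx => (hodd i ho).2 x (.inr hx)⟩
        have hi : (i + 1) / 2 ≤ i / 2 := by obtain ⟨k, hk⟩ := ho; omega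
        exact ⟨(ih.1.of_isFreeStep hstep inter_subset_left).mono (scale hi),
          (ih.1.add_of_isFreeStep hstep inter_subset_left subset_rfl
            fun z hz x hx => hsep z (.inl hz) x (.inr hx)).mono (scale_succ (by omega))⟩
  intro i x hx hfree
  rcases mem_symmDiff.1 hx with ⟨hxp, hxq⟩ | ⟨hxq, hxp⟩
  · exact (key i).1 x ⟨hxp, fun h => hxq h.2⟩ hfree
  · exact (scale (Nat.div_le_div_right i.le_succ)).trans
      ((key i).2 x ⟨hxq, fun h => hxp h.1⟩ hfree)
end
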